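/- arXiv:2501.18053 — 9 statements merged into one kernel-verified Lean document; each statement's English description precedes it below -/
import Mathlib

section
/- Let A be a commutative idempotent semiring and C a prime congruence on A. Then for any a, b ∈ A, either (a+b, a) ∈ C or (a+b, b) ∈ C; in particular the quotient A/C is totally ordered by the addition-induced order. -/
/-- The tropical semifield `𝕋 = (ℝ ∪ {-∞}, max, +)`, realized as
`Tropical (WithTop (OrderDual ℝ))`: tropical addition is `max` and tropical
multiplication is ordinary addition of reals, `0 = -∞`. -/
abbrev T : Type := Tropical (WithTop (OrderDual ℝ))

/-- The tropical Laurent polynomial semiring `T[x₁^{±1},…,x_n^{±1}]`. -/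
abbrev TLaur (n : ℕ) : Type := AddMonoidAlgebra T (Fin n → ℤ)

/-- The tropical polynomial semiring `T[x₁,…,x_n]`. -/
abbrev TPoly (n : ℕ) : Type := AddMonoidAlgebra T (Fin n → ℕ)

/-- View an element of a monomial-algebra over `T` as a finitely supported function. -/
def toF {G : Type} (f : AddMonoidAlgebra T G) : G →₀ T := f.coeff

/-- The twisted product of pairs over a commutative semiring. -/
def tw {R : Type*} [CommSemiring R] (α β : R × R) : R × R :=
  (α.1 * β.1 + α.2 * β.2, α.1 * β.2 + α.2 * β.1)

/-- A congruence is prime if it is proper and whenever the twisted product of two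
pairs lies in it, one of the pairs lies in it. -/
def IsPrimeCon {R : Type*} [CommSemiring R] (C : RingCon R) : Prop :=
  (∃ a b : R, ¬ C a b) ∧
    ∀ α β : R × R, C (tw α β).1 (tw α β).2 → C α.1 α.2 ∨ C β.1 β.2

/-!
In an idempotent semiring the twisted product of `(a + b, a)` and `(a + b, b)` has equal
components: both expand to `a² + b² + ab`, the repeated `ab` terms collapsing. Primality then
puts one of the two pairs in `C`.
-/

theorem tw_add_left_add_right_fst_eq_snd {A : Type*} [CommSemiring A]
    (hidem : ∀ a : A, a + a = a) (a b : A) :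
    (tw (a + b, a) (a + b, b)).1 = (tw (a + b, a) (a + b, b)).2 := by
  change (a + b) * (a + b) + a * b = (a + b) * b + a * (a + b)
  rw [show (a + b) * (a + b) + a * b = a * a + b * b + (a * b + a * b + a * b) by ring,
    show (a + b) * b + a * (a + b) = a * a + b * b + (a * b + a * b) by ring, hidem, hidem]

theorem IsPrimeCon.add_rel_left_or_right {A : Type*} [CommSemiring A]
    (hidem : ∀ a : A, a + a = a) {C : RingCon A} (hC : IsPrimeCon C) (a b : A) :
    C (a + b) a ∨ C (a + b) b :=
  hC.2 (a + b, a) (a + b, b) (tw_add_left_add_right_fst_eq_snd hidem a b ▸ C.refl _)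

/-- For a prime congruence `C`, for all `a b` either `(a+b, a) ∈ C` or `(a+b, b) ∈ C`;
in particular the quotient is totally ordered by the addition-induced order. -/
theorem prime_con_totallyOrdered {A : Type*} [CommSemiring A] (hidem : ∀ a : A, a + a = a)
    (C : RingCon A) (hC : IsPrimeCon C) :
    (∀ a b : A, C (a + b) a ∨ C (a + b) b) ∧
      (∀ x y : C.Quotient, x + y = y ∨ x + y = x) := by
  refine ⟨hC.add_rel_left_or_right hidem, fun x y => ?_⟩
  induction x, y using Quotient.inductionOn₂' with
  | h a b =>
    change ((a + b : A) : C.Quotient) = b ∨ ((a + b : A) : C.Quotient) = a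
    rw [RingCon.eq, RingCon.eq]
    exact (hC.add_rel_left_or_right hidem a b).symm
end

section
/- Let A be a commutative idempotent semiring in which every element is a sum of invertible elements, and let P ⊆ Q be congruences on A. If P is prime, then Q is prime (when Q is proper). -/
/-!
Idempotence lets primality be applied to `tw (x + y, x) (x + y, y)`, whose two components
coincide; so every prime congruence, and hence every congruence `Q` above one, totally
orders `A` by `x ≤ y ↔ x + y ~ y`. As `A` is generated additively by units, every element is
then `Q`-equivalent to `0` or to a unit. For pairs with dominant first entries `a₁, b₁`, the
twisted product relation collapses to `a₁ b₁ ~ a₁ b₂ + a₂ b₁`; when `a₁ ~ u` and `b₁ ~ v` are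
units, dividing by `u v` and keeping the larger summand gives `a₂ ~ u` or `b₂ ~ v`.
-/

theorem IsPrimeCon.add_rel_or {R : Type*} [CommSemiring R] (hidem : ∀ a : R, a + a = a)
    {C : RingCon R} (hC : IsPrimeCon C) (x y : R) : C (x + y) x ∨ C (x + y) y := by
  have hcollapse : (x + y) * (x + y) + x * y = (x + y) * y + x * (x + y) := by
    calc (x + y) * (x + y) + x * y = x * x + (x * y + x * y + x * y) + y * y := by ring
      _ = x * x + (x * y + x * y) + y * y := by rw [hidem, hidem]
      _ = (x + y) * y + x * (x + y) := by ring
  exact hC.2 (x + y, x) (x + y, y) (by simp only [tw, hcollapse]; exact C.refl _)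

namespace RingCon

variable {R : Type*} [CommSemiring R] {C : RingCon R}

theorem rel_of_add_rel_of_rel_zero {a b : R} (h : C (a + b) a) (h0 : C a 0) : C a b := by
  have hb : C (a + b) b := by simpa using C.add h0 (C.refl b)
  exact C.trans (C.symm h) hb

theorem add_rel_of_add_eq {s a z : R} (h : C s a) (hz : s + z = s) : C (a + z) a := by
  have h' := C.add (C.symm h) (C.refl z)
  rw [hz] at h'
  exact C.trans h' h

theorem sum_rel_zero_or_unit (htot : ∀ x y : R, C (x + y) x ∨ C (x + y) y)
    (s : Multiset R) (hs : ∀ x ∈ s, IsUnit x) : C s.sum 0 ∨ ∃ u : Rˣ, C s.sum u := by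
  induction s using Multiset.induction with
  | empty => exact Or.inl (by simpa using C.refl 0)
  | cons x s ih =>
    obtain ⟨x, rfl⟩ := hs x (Multiset.mem_cons_self x s)
    rw [Multiset.sum_cons]
    right
    rcases ih fun y hy => hs y (Multiset.mem_cons_of_mem hy) with h0 | ⟨u, hu⟩
    · exact ⟨x, by simpa using C.add (C.refl (x : R)) h0⟩
    · have hxu := C.add (C.refl (x : R)) hu
      rcases htot x u with h | h
      · exact ⟨x, C.trans hxu h⟩
      · exact ⟨u, C.trans hxu h⟩

theorem rel_of_one_rel_inv_mul {u : Rˣ} {a : R} (h : C 1 (↑u⁻¹ * a)) : C u a := by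
  simpa [← mul_assoc] using C.mul (C.refl (u : R)) h

theorem units_rel_or_of_mul_rel (htot : ∀ x y : R, C (x + y) x ∨ C (x + y) y)
    {u v : Rˣ} {a b : R} (h : C (u * v) (u * b + a * v)) : C u a ∨ C v b := by
  have h' : C 1 (↑v⁻¹ * b + ↑u⁻¹ * a) := by
    have hmul := C.mul h (C.refl (↑u⁻¹ * ↑v⁻¹ : R))
    have hl : (u * v * (↑u⁻¹ * ↑v⁻¹) : R) = 1 := by
      rw [mul_mul_mul_comm, Units.mul_inv, Units.mul_inv, one_mul]
    have hr : ((u * b + a * v) * (↑u⁻¹ * ↑v⁻¹) : R) = ↑v⁻¹ * b + ↑u⁻¹ * a := by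
      calc ((u * b + a * v) * (↑u⁻¹ * ↑v⁻¹) : R)
          = (u * ↑u⁻¹ : R) * (↑v⁻¹ * b) + (v * ↑v⁻¹ : R) * (↑u⁻¹ * a) := by ring
        _ = ↑v⁻¹ * b + ↑u⁻¹ * a := by simp
    rwa [hl, hr] at hmul
  rcases htot (↑v⁻¹ * b) (↑u⁻¹ * a) with hb | ha
  · exact Or.inr (rel_of_one_rel_inv_mul (C.trans h' hb))
  · exact Or.inl (rel_of_one_rel_inv_mul (C.trans h' ha))

variable (hidem : ∀ a : R, a + a = a)
  (hsum : ∀ a : R, ∃ s : Multiset R, (∀ x ∈ s, IsUnit x) ∧ s.sum = a)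
  (htot : ∀ x y : R, C (x + y) x ∨ C (x + y) y)
include hidem hsum htot

theorem rel_or_of_twisted_rel_of_dominant {a₁ a₂ b₁ b₂ : R} (ha : C (a₁ + a₂) a₁)
    (hb : C (b₁ + b₂) b₁) (h : C (a₁ * b₁ + a₂ * b₂) (a₁ * b₂ + a₂ * b₁)) :
    C a₁ a₂ ∨ C b₁ b₂ := by
  have hprod : C ((a₁ + a₂) * (b₁ + b₂)) (a₁ * b₁) := C.mul ha hb
  have habsorb : (a₁ + a₂) * (b₁ + b₂) + a₂ * b₂ = (a₁ + a₂) * (b₁ + b₂) := by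
    calc (a₁ + a₂) * (b₁ + b₂) + a₂ * b₂
        = a₁ * b₁ + a₁ * b₂ + a₂ * b₁ + (a₂ * b₂ + a₂ * b₂) := by ring
      _ = (a₁ + a₂) * (b₁ + b₂) := by rw [hidem]; ring
  have hmain : C (a₁ * b₁) (a₁ * b₂ + a₂ * b₁) :=
    C.trans (C.symm (add_rel_of_add_eq hprod habsorb)) h
  have hzero_or_unit (c : R) : C c 0 ∨ ∃ u : Rˣ, C c u := by
    obtain ⟨s, hs, rfl⟩ := hsum c
    exact sum_rel_zero_or_unit htot s hs
  rcases hzero_or_unit a₁ with ha0 | ⟨u, hu⟩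
  · exact Or.inl (rel_of_add_rel_of_rel_zero ha ha0)
  rcases hzero_or_unit b₁ with hb0 | ⟨v, hv⟩
  · exact Or.inr (rel_of_add_rel_of_rel_zero hb hb0)
  have huv : C (u * v) (u * b₂ + a₂ * v) :=
    C.trans (C.trans (C.symm (C.mul hu hv)) hmain)
      (C.add (C.mul hu (C.refl b₂)) (C.mul (C.refl a₂) hv))
  rcases units_rel_or_of_mul_rel htot huv with hau | hbv
  · exact Or.inl (C.trans hu hau)
  · exact Or.inr (C.trans hv hbv)

theorem isPrimeCon_of_total (hproper : ∃ a b : R, ¬ C a b) : IsPrimeCon C := by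
  refine ⟨hproper, ?_⟩
  rintro ⟨a₁, a₂⟩ ⟨b₁, b₂⟩ h
  simp only [tw] at h ⊢
  wlog ha : C (a₁ + a₂) a₁ generalizing a₁ a₂
  · have ha' : C (a₂ + a₁) a₂ := add_comm a₁ a₂ ▸ (htot a₁ a₂).resolve_left ha
    refine (this a₂ a₁ ?_ ha').imp_left C.symm
    convert C.symm h using 1 <;> ring
  wlog hb : C (b₁ + b₂) b₁ generalizing b₁ b₂
  · have hb' : C (b₂ + b₁) b₂ := add_comm b₁ b₂ ▸ (htot b₁ b₂).resolve_left hb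
    exact (this b₂ b₁ (C.symm h) hb').imp_right C.symm
  exact rel_or_of_twisted_rel_of_dominant hidem hsum htot ha hb h

end RingCon

/-- If every element of `A` is a sum of units, `P ≤ Q` are congruences with `Q` proper,
and `P` is prime, then `Q` is prime. -/
theorem prime_le_prime {A : Type*} [CommSemiring A] (hidem : ∀ a : A, a + a = a)
    (hsum : ∀ a : A, ∃ s : Multiset A, (∀ x ∈ s, IsUnit x) ∧ s.sum = a)
    (P Q : RingCon A) (hPQ : P ≤ Q) (hQ : ∃ a b : A, ¬ Q a b) (hP : IsPrimeCon P) :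
    IsPrimeCon Q := by
  have htotQ (x y : A) : Q (x + y) x ∨ Q (x + y) y :=
    (hP.add_rel_or hidem x y).imp (fun h => hPQ h) (fun h => hPQ h)
  exact RingCon.isPrimeCon_of_total hidem hsum htotQ hQ
end

section
/- Let A be a commutative idempotent semiring in which every element is a sum of invertible elements, and C a proper congruence on A. If the quotient A/C is totally ordered by the addition-induced order, then A/C is a semifield (every nonzero element is invertible) and C is a prime congruence. -/
/-!
In a totally ordered idempotent semiring a finite sum equals its largest summand, so in `A/C` every
nonzero class, being a sum of images of units, is itself the image of a unit. For primality, write the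
twisted equation in `A/C` as `x u + y v = x v + y u` with `x ≤ y` and `u ≤ v`. Then `x u ≤ y v`
absorbs, leaving `y v = x v + y u`; by totality the right side is `x v` or `y u`, and cancelling the
unit `v` or `y` gives `x = y` or `u = v`.
-/

theorem Multiset.exists_mem_eq_sum_of_total {M : Type*} [AddCommMonoid M]
    (htot : ∀ x y : M, x + y = y ∨ x + y = x) {t : Multiset M} (ht : t ≠ 0) :
    ∃ z ∈ t, t.sum = z := by
  induction t using Multiset.induction_on with
  | empty => exact absurd rfl ht
  | cons a t ih =>
    rw [Multiset.sum_cons]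
    by_cases ht₀ : t = 0
    · exact ⟨a, Multiset.mem_cons_self a t, by simp [ht₀]⟩
    rcases htot a t.sum with h | h
    · obtain ⟨z, hz, hsum⟩ := ih ht₀
      exact ⟨z, Multiset.mem_cons_of_mem hz, h.trans hsum⟩
    · exact ⟨a, Multiset.mem_cons_self a t, h⟩

theorem exists_isUnit_sum_of_surjective {A B : Type*} [Semiring A] [Semiring B] (f : A →+* B)
    (hf : Function.Surjective f)
    (hsum : ∀ a : A, ∃ s : Multiset A, (∀ x ∈ s, IsUnit x) ∧ s.sum = a) (b : B) :
    ∃ s : Multiset B, (∀ x ∈ s, IsUnit x) ∧ s.sum = b := by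
  obtain ⟨a, rfl⟩ := hf b
  obtain ⟨s, hs, rfl⟩ := hsum a
  refine ⟨s.map f, ?_, (map_multiset_sum f s).symm⟩
  intro x hx
  obtain ⟨u, hu, rfl⟩ := Multiset.mem_map.mp hx
  exact (hs u hu).map f

theorem isUnit_of_ne_zero_of_total {Q : Type*} [Semiring Q]
    (htot : ∀ x y : Q, x + y = y ∨ x + y = x)
    (hsum : ∀ a : Q, ∃ s : Multiset Q, (∀ x ∈ s, IsUnit x) ∧ s.sum = a) {a : Q} (ha : a ≠ 0) :
    IsUnit a := by
  obtain ⟨s, hs, rfl⟩ := hsum a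
  obtain ⟨z, hz, hsz⟩ :=
    Multiset.exists_mem_eq_sum_of_total htot (t := s) (fun h ↦ ha (by rw [h, Multiset.sum_zero]))
  exact hsz ▸ hs z hz

theorem eq_or_eq_of_twisted_eq_of_total {Q : Type*} [CommSemiring Q]
    (htot : ∀ x y : Q, x + y = y ∨ x + y = x) (hunit : ∀ a : Q, a ≠ 0 → IsUnit a)
    {x y u v : Q} (heq : x * u + y * v = x * v + y * u) : x = y ∨ u = v := by
  wlog hxy : x + y = y generalizing x y
  · have hyx : y + x = x := by rw [add_comm]; exact (htot x y).resolve_left hxy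
    refine (this ?_ hyx).imp Eq.symm id
    rw [add_comm (y * u), add_comm (y * v), heq]
  wlog huv : u + v = v generalizing u v
  · have hvu : v + u = u := by rw [add_comm]; exact (htot u v).resolve_left huv
    exact (this heq.symm hvu).imp id Eq.symm
  have hvv : v + v = v := (htot v v).elim id id
  have hdominant : y * v = x * v + y * u :=
    calc y * v = (x + y) * v := by rw [hxy]
      _ = x * v + y * (u + v) := by rw [huv, add_mul]
      _ = x * v + y * u + y * v := by rw [mul_add, add_assoc]
      _ = x * u + y * (v + v) := by rw [← heq, mul_add, add_assoc]
      _ = x * v + y * u := by rw [hvv, heq]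
  rcases htot (x * v) (y * u) with h | h
  · by_cases hy : y = 0
    · subst hy
      exact Or.inl (by rwa [add_zero] at hxy)
    · exact Or.inr ((hunit y hy).mul_left_cancel (hdominant.trans h).symm)
  · by_cases hv : v = 0
    · subst hv
      exact Or.inr (by rwa [add_zero] at huv)
    · exact Or.inl ((hunit v hv).mul_right_cancel (hdominant.trans h)).symm

theorem totallyOrdered_quotient_semifield_prime_general {A : Type*} [CommSemiring A]
    (hsum : ∀ a : A, ∃ s : Multiset A, (∀ x ∈ s, IsUnit x) ∧ s.sum = a)
    (C : RingCon A) (hproper : ∃ a b : A, ¬ C a b)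
    (htot : ∀ x y : C.Quotient, x + y = y ∨ x + y = x) :
    (∀ x : C.Quotient, x ≠ 0 → IsUnit x) ∧ IsPrimeCon C := by
  have hunit : ∀ x : C.Quotient, x ≠ 0 → IsUnit x := fun _ ↦
    isUnit_of_ne_zero_of_total htot (exists_isUnit_sum_of_surjective C.mk' C.mk'_surjective hsum)
  refine ⟨hunit, hproper, fun α β h ↦ ?_⟩
  rw [← C.eq, ← C.eq]
  refine eq_or_eq_of_twisted_eq_of_total htot hunit ?_
  simpa only [tw, RingCon.coe_add, RingCon.coe_mul] using C.eq.mpr h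

/-- If every element of `A` is a sum of units, `C` is a proper congruence, and the
quotient `A/C` is totally ordered by the addition-induced order, then `A/C` is a
semifield (every nonzero element is a unit) and `C` is prime. -/
theorem totallyOrdered_quotient_semifield_prime {A : Type*} [CommSemiring A]
    (hidem : ∀ a : A, a + a = a)
    (hsum : ∀ a : A, ∃ s : Multiset A, (∀ x ∈ s, IsUnit x) ∧ s.sum = a)
    (C : RingCon A) (hproper : ∃ a b : A, ¬ C a b)
    (htot : ∀ x y : C.Quotient, x + y = y ∨ x + y = x) :
    (∀ x : C.Quotient, x ≠ 0 → IsUnit x) ∧ IsPrimeCon C :=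
  totallyOrdered_quotient_semifield_prime_general hsum C hproper htot
end

section
/- Let C be a congruence on the tropical Laurent polynomial semiring T[x₁^{±1},…,x_n^{±1}]. Then the set I = { f : bend(f) ⊆ C } of Laurent polynomials all of whose bend relations lie in C is an ideal of the semiring. -/
/-- All bend relations of `f` (the pairs `(f, f with its i-th term deleted)`,
for `i` in the support of `f`) lie in the congruence `C`. -/
def bendIn {G : Type} [AddCommMonoid G] (C : RingCon (AddMonoidAlgebra T G))
    (f : AddMonoidAlgebra T G) : Prop :=
  ∀ i ∈ (toF f).support, C f (AddMonoidAlgebra.ofCoeff (Finsupp.erase i (toF f)))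

/-- `Bend I`: the congruence generated by the bend relations of all elements of `I`. -/
noncomputable def Bend {G : Type} [AddCommMonoid G] (I : Set (AddMonoidAlgebra T G)) :
    RingCon (AddMonoidAlgebra T G) :=
  ringConGen (fun f g => f ∈ I ∧ ∃ i ∈ (toF f).support, g = AddMonoidAlgebra.ofCoeff (Finsupp.erase i (toF f)))

/-! A Laurent polynomial `f` lies in the set iff `f ~ f.erase m` for every monomial `m` (for `m`
outside the support this is reflexivity). Since `erase m` is additive, this condition is closed
under sums; since multiplying by a monomial `single g r` shifts supports,
`(single g r * f).erase m = single g r * f.erase (-g + m)`, so it is closed under multiplication by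
monomials, hence by all Laurent polynomials. -/

namespace AddMonoidAlgebra

variable {R G : Type*} [Semiring R]

lemma erase_add (m : G) (x y : R[G]) : (x + y).erase m = x.erase m + y.erase m :=
  congrArg ofCoeff (Finsupp.erase_add m x.coeff y.coeff)

lemma erase_of_notMem_support {m : G} {x : R[G]} (hm : m ∉ x.coeff.support) : x.erase m = x :=
  congrArg ofCoeff (Finsupp.erase_of_notMem_support hm)

lemma erase_single_mul [AddGroup G] (g m : G) (r : R) (x : R[G]) :
    (single g r * x).erase m = single g r * x.erase (-g + m) := by
  ext h
  by_cases hh : h = m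
  · simp [hh]
  · have : -g + h ≠ -g + m := fun e => hh (add_left_cancel e)
    simp [Finsupp.erase_ne hh, Finsupp.erase_ne this]

end AddMonoidAlgebra

open AddMonoidAlgebra

namespace RingCon

variable {R G : Type*} [Semiring R] [AddGroup G]

def bendIdeal (C : RingCon R[G]) : Ideal R[G] where
  carrier := {f | ∀ m, C f (f.erase m)}
  zero_mem' m := by simpa using C.refl 0
  add_mem' {f f'} hf hf' m := by
    simpa only [erase_add] using C.add (hf m) (hf' m)
  smul_mem' r f hf := by
    induction r using AddMonoidAlgebra.induction_linear with
    | zero => intro m; simpa using C.refl 0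
    | add r r' hr hr' =>
      intro m
      simpa only [smul_eq_mul, add_mul, erase_add] using C.add (hr m) (hr' m)
    | single g r =>
      intro m
      rw [smul_eq_mul, erase_single_mul]
      exact C.mul (C.refl _) (hf _)

lemma mem_bendIdeal {C : RingCon R[G]} {f : R[G]} : f ∈ C.bendIdeal ↔ ∀ m, C f (f.erase m) :=
  Iff.rfl

end RingCon

lemma bendIn_iff_forall_erase {G : Type} [AddCommMonoid G] {C : RingCon (AddMonoidAlgebra T G)}
    {f : AddMonoidAlgebra T G} : bendIn C f ↔ ∀ m, C f (f.erase m) := by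
  refine ⟨fun hf m => ?_, fun hf m _ => hf m⟩
  by_cases hm : m ∈ f.coeff.support
  · exact hf m hm
  · rw [erase_of_notMem_support hm]
    exact C.refl f

/-- For any congruence `C` on the tropical Laurent polynomial semiring, the set of
Laurent polynomials all of whose bend relations lie in `C` is an ideal. -/
theorem bendIn_isIdeal {n : ℕ} (C : RingCon (TLaur n)) :
    ∃ J : Ideal (TLaur n), (J : Set (TLaur n)) = {f : TLaur n | bendIn C f} :=
  ⟨C.bendIdeal, Set.ext fun _ => RingCon.mem_bendIdeal.trans bendIn_iff_forall_erase.symm⟩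
end

section
/- The intersection of two closed ideals of the tropical (Laurent) polynomial semiring is a closed ideal, where an ideal I is closed if I equals the set of all polynomials whose bend relations lie in the congruence generated by the bend relations of elements of I. -/
/-- An ideal is closed if it consists exactly of the polynomials all of whose bend
relations lie in the congruence generated by the bend relations of its elements. -/
def IsClosedIdeal {n : ℕ} (I : Ideal (TPoly n)) : Prop :=
  ∀ f : TPoly n, bendIn (Bend (I : Set (TPoly n))) f ↔ f ∈ I

section

variable {G : Type} [AddCommMonoid G]

lemma bend_mono {I J : Set (AddMonoidAlgebra T G)} (h : I ⊆ J) : Bend I ≤ Bend J :=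
  RingCon.ringConGen_le.mpr fun _ _ hfg => RingConGen.Rel.of _ _ ⟨h hfg.1, hfg.2⟩

lemma bendIn.mono {C D : RingCon (AddMonoidAlgebra T G)} (hCD : C ≤ D)
    {f : AddMonoidAlgebra T G} (hf : bendIn C f) : bendIn D f :=
  fun i hi => hCD (hf i hi)

lemma bendIn_bend_of_mem {I : Set (AddMonoidAlgebra T G)} {f : AddMonoidAlgebra T G}
    (hf : f ∈ I) : bendIn (Bend I) f :=
  fun i hi => RingConGen.Rel.of _ _ ⟨hf, i, hi, rfl⟩

end

/-- The intersection of two closed ideals is a closed ideal. -/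
theorem inf_closed_ideals {n : ℕ} (I J : Ideal (TPoly n))
    (hI : IsClosedIdeal I) (hJ : IsClosedIdeal J) : IsClosedIdeal (I ⊓ J) := by
  intro f
  refine ⟨fun hf => ⟨?_, ?_⟩, bendIn_bend_of_mem⟩
  · exact (hI f).mp (hf.mono (bend_mono fun _ hg => hg.1))
  · exact (hJ f).mp (hf.mono (bend_mono fun _ hg => hg.2))
end

section
/- If P is a prime congruence on the tropical Laurent polynomial semiring T[x₁^{±1},…,x_n^{±1}], then the ideal |P| = { f : bend(f) ⊆ P } is a prime ideal. -/
/-!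
Work in the quotient `S = R ⧸ P`. It is additively idempotent, and primality of `P` says that
`a c + b d = a d + b c` forces `a = b` or `c = d`. For the pairs `(a + b, b)`, `(a + b, a)` the two
sides agree by idempotence, so `S` is totally ordered by `a ≤ b ↔ a + b = b`; for `d = 0` we get
cancellation by nonzero elements. Bend relations are stable under sums and monomial multiples,
so `|P|` is an ideal, and `1 ∉ |P|` because `bend(1)` identifies `1` with `0`.
If `f, g ∉ |P|`, choose terms `m` of `f` and `n` of `g` whose deletion changes the class. Then
`f ≡ m` strictly dominates `f' = f - m`, and `g ≡ n` strictly dominates `g' = g - n`, so `m n`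
strictly dominates `m g' + f' g`, which the bend relation of `f g` at the exponent of `m n` forbids.
-/
open AddMonoidAlgebra

section IdempotentSemiring

variable {S : Type*} [CommSemiring S]

theorem add_eq_left_or_eq_right (hidem : ∀ a : S, a + a = a)
    (htwist : ∀ a b c d : S, a * c + b * d = a * d + b * c → a = b ∨ c = d) (a b : S) :
    a + b = a ∨ a + b = b := by
  have hab := hidem (a * b)
  refine (htwist (a + b) b (a + b) a ?_).symm
  calc (a + b) * (a + b) + b * a = a * a + b * b + (a * b + a * b + a * b) := by ring
    _ = a * a + b * b + (a * b + a * b) := by rw [hab, hab]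
    _ = (a + b) * a + b * (a + b) := by ring

theorem eq_of_add_eq_of_ne (hidem : ∀ a : S, a + a = a)
    (htwist : ∀ a b c d : S, a * c + b * d = a * d + b * c → a = b ∨ c = d)
    {m a a' : S} (h : m + a' = a) (ha : a ≠ a') : a = m := by
  rcases add_eq_left_or_eq_right hidem htwist m a' with h' | h'
  · rw [← h, h']
  · exact absurd (h.symm.trans h') ha

theorem mul_add_mul_add_ne (hidem : ∀ a : S, a + a = a)
    (htwist : ∀ a b c d : S, a * c + b * d = a * d + b * c → a = b ∨ c = d)
    {m n a a' b b' : S} (ha : m + a' = a) (ha' : a ≠ a') (hb : n + b' = b) (hb' : b ≠ b') :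
    m * n + (m * b' + a' * b) ≠ m * b' + a' * b := by
  have cancel : ∀ {x y z : S}, x * z = y * z → x = y ∨ z = 0 := fun h =>
    htwist _ _ _ 0 (by simpa using h)
  rw [eq_of_add_eq_of_ne hidem htwist hb hb']
  replace ha : m + a' ≠ a' := ha ▸ ha'
  replace hb : n + b' ≠ b' := hb ▸ hb'
  intro h
  rcases add_eq_left_or_eq_right hidem htwist (m * b') (a' * n) with h' | h'
  · rw [h', ← mul_add, mul_comm, mul_comm m] at h
    rcases cancel h with hcancel | hcancel
    · exact hb hcancel
    · exact ha (by rw [hcancel, zero_add])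
  · rw [h', ← add_mul] at h
    rcases cancel h with hcancel | hcancel
    · exact ha hcancel
    · exact hb (by rw [hcancel, zero_add])

end IdempotentSemiring

section PrimeCon

variable {R : Type*} [CommSemiring R] {P : RingCon R}

theorem IsPrimeCon.nontrivial (hP : IsPrimeCon P) : Nontrivial P.Quotient :=
  let ⟨a, b, hab⟩ := hP.1
  ⟨⟨a, b, mt P.eq.mp hab⟩⟩

theorem IsPrimeCon.eq_or_eq_of_twist (hP : IsPrimeCon P) (a b c d : P.Quotient)
    (h : a * c + b * d = a * d + b * c) : a = b ∨ c = d := by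
  obtain ⟨a, rfl⟩ := P.mk'_surjective a
  obtain ⟨b, rfl⟩ := P.mk'_surjective b
  obtain ⟨c, rfl⟩ := P.mk'_surjective c
  obtain ⟨d, rfl⟩ := P.mk'_surjective d
  simp only [RingCon.coe_mk', ← RingCon.coe_mul, ← RingCon.coe_add, RingCon.eq] at h ⊢
  exact hP.2 (a, b) (c, d) h

theorem RingCon.quotient_add_self (hR : ∀ a : R, a + a = a) (x : P.Quotient) : x + x = x := by
  obtain ⟨a, rfl⟩ := P.mk'_surjective x
  rw [← map_add, hR]

end PrimeCon

section TropicalAlgebra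

variable {G : Type} [AddCommMonoid G] {C : RingCon (AddMonoidAlgebra T G)}

theorem tropical_add_self (x : AddMonoidAlgebra T G) : x + x = x := by
  ext; simp

theorem tropical_erase_add_self (m : G) (x : AddMonoidAlgebra T G) : x.erase m + x = x := by
  ext y
  rcases eq_or_ne y m with rfl | hy <;> simp [Finsupp.erase_ne, *]

theorem bendIn_iff {f : AddMonoidAlgebra T G} : bendIn C f ↔ ∀ m, C f (f.erase m) := by
  refine ⟨fun hf m => ?_, fun hf m _ => hf m⟩
  by_cases hm : m ∈ (toF f).support
  · exact hf m hm
  · rw [show f.erase m = f from congrArg ofCoeff (Finsupp.erase_of_notMem_support hm)]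
    exact C.refl f

theorem bendIn_zero : bendIn C 0 :=
  bendIn_iff.mpr fun m => by rw [erase_zero]; exact C.refl 0

theorem bendIn_add {f g : AddMonoidAlgebra T G} (hf : bendIn C f) (hg : bendIn C g) :
    bendIn C (f + g) :=
  bendIn_iff.mpr fun m => by
    rw [show (f + g).erase m = f.erase m + g.erase m by ext; simp [Finsupp.erase_add]]
    exact C.add (bendIn_iff.mp hf m) (bendIn_iff.mp hg m)

theorem bendIn.rel_of_eq_single_add {f x : AddMonoidAlgebra T G} {m : G} {r : T}
    (hf : bendIn C f) (h : f = single m r + x) : C f x := by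
  have hfx : f + x = f := by rw [h, add_assoc, tropical_add_self]
  have herase : f.erase m + x = x := by
    rw [show f.erase m = x.erase m by rw [h]; ext y; rcases eq_or_ne y m with rfl | hy <;> simp [*],
      tropical_erase_add_self]
  simpa only [hfx, herase] using C.add (bendIn_iff.mp hf m) (C.refl x)

end TropicalAlgebra

section TropicalAlgebraCancel

variable {G : Type} [AddCancelCommMonoid G] {C : RingCon (AddMonoidAlgebra T G)}

theorem erase_add_single_mul (m m' : G) (r : T) (x : AddMonoidAlgebra T G) :
    (single m r * x).erase (m + m') = single m r * x.erase m' := by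
  ext y
  rcases eq_or_ne y (m + m') with rfl | hy
  · simp
  by_cases hd : ∃ d, y = m + d
  · obtain ⟨d, rfl⟩ := hd
    have hd : d ≠ m' := fun h => hy (by rw [h])
    simp [Finsupp.erase_ne hy, Finsupp.erase_ne hd]
  · have hd' : ∀ d, m + d ≠ y := fun d h => hd ⟨d, h.symm⟩
    simp [Finsupp.erase_ne hy, coeff_single_mul_of_forall_add_ne, hd']

theorem bendIn_single_mul {x : AddMonoidAlgebra T G} (m : G) (r : T) (hx : bendIn C x) :
    bendIn C (single m r * x) := by
  intro y hy
  obtain ⟨d, rfl⟩ : ∃ d, y = m + d := by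
    by_contra! hd
    exact Finsupp.mem_support_iff.mp hy
      (coeff_single_mul_of_forall_add_ne r x fun d h => hd d h.symm)
  change C _ ((single m r * x).erase (m + d))
  rw [erase_add_single_mul]
  exact C.mul (C.refl _) (bendIn_iff.mp hx d)

theorem bendIn_mul (c : AddMonoidAlgebra T G) {f : AddMonoidAlgebra T G} (hf : bendIn C f) :
    bendIn C (c * f) := by
  induction c using AddMonoidAlgebra.induction_linear with
  | zero => simpa using bendIn_zero
  | add a b ha hb => simpa [add_mul] using bendIn_add ha hb
  | single m r => exact bendIn_single_mul m r hf

def bendIdeal (C : RingCon (AddMonoidAlgebra T G)) : Ideal (AddMonoidAlgebra T G) where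
  carrier := {f | bendIn C f}
  add_mem' := bendIn_add
  zero_mem' := bendIn_zero
  smul_mem' c _ hf := bendIn_mul c hf

theorem bendIdeal_ne_top (hP : IsPrimeCon C) : bendIdeal C ≠ ⊤ := by
  rw [Ideal.ne_top_iff_one]
  intro h
  have h10 : C 1 0 := by simpa [one_def] using bendIn_iff.mp h 0
  have := hP.nontrivial
  exact one_ne_zero (by simpa only [RingCon.coe_one, RingCon.coe_zero] using C.eq.mpr h10)

theorem bendIdeal_isPrime (hP : IsPrimeCon C) : (bendIdeal C).IsPrime := by
  have hidem := RingCon.quotient_add_self (P := C) tropical_add_self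
  have htwist := hP.eq_or_eq_of_twist
  refine ⟨bendIdeal_ne_top hP, fun {f g} hfg => ?_⟩
  by_contra! hc
  obtain ⟨i, hi⟩ : ∃ i, ¬ C f (f.erase i) := by simpa [bendIdeal, bendIn_iff] using hc.1
  obtain ⟨k, hk⟩ : ∃ k, ¬ C g (g.erase k) := by simpa [bendIdeal, bendIn_iff] using hc.2
  set m := single i (f.coeff i)
  set n := single k (g.coeff k)
  have hf : m + f.erase i = f := single_add_erase i f
  have hg : n + g.erase k = g := single_add_erase k g
  have hprod : f * g = m * n + (m * g.erase k + f.erase i * g) :=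
    calc f * g = (m + f.erase i) * (n + g.erase k) := by rw [hf, hg]
      _ = m * n + (m * g.erase k + f.erase i * (n + g.erase k)) := by ring
      _ = m * n + (m * g.erase k + f.erase i * g) := by rw [hg]
  have hX := hfg.rel_of_eq_single_add (hprod.trans (by rw [single_mul_single]))
  rw [hprod] at hX
  refine mul_add_mul_add_ne hidem htwist ?_ (mt C.eq.mp hi) ?_ (mt C.eq.mp hk)
    (by simpa only [RingCon.coe_add, RingCon.coe_mul] using C.eq.mpr hX)
  · rw [← RingCon.coe_add, hf]
  · rw [← RingCon.coe_add, hg]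

end TropicalAlgebraCancel

/-- If `P` is a prime congruence on the tropical Laurent polynomial semiring, then
`|P| = { f : bend(f) ⊆ P }` is a prime ideal. -/
theorem bendIn_prime_ideal {n : ℕ} (P : RingCon (TLaur n)) (hP : IsPrimeCon P) :
    ∃ J : Ideal (TLaur n), (J : Set (TLaur n)) = {f : TLaur n | bendIn P f} ∧
      J.IsPrime :=
  ⟨bendIdeal P, rfl, bendIdeal_isPrime hP⟩
end

section
/- Every non-zero prime ideal of the tropical Laurent polynomial semiring T[x₁^{±1},…,x_n^{±1}] contains a binomial (a sum of two terms). -/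
theorem Tropical.isUnit_of_ne_zero {R : Type*} [LinearOrderedAddCommGroupWithTop R]
    {x : Tropical R} (hx : x ≠ 0) : IsUnit x :=
  .of_mul_eq_one x⁻¹ <| untrop_injective <|
    LinearOrderedAddCommGroupWithTop.add_neg_cancel_of_ne_top fun h ↦ hx (untrop_injective h)

namespace AddMonoidAlgebra

section Semiring

variable {k G : Type*} [Semiring k]

theorem add_self_of_forall_add_self (hk : ∀ c : k, c + c = c) (f : k[G]) : f + f = f := by
  ext g
  exact hk _

theorem single_add_erase_erase_eq_erase_right (f : k[G]) {u v : G} (h : u ≠ v) :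
    single u (f.coeff u) + (f.erase u).erase v = f.erase v := by
  classical
  ext w
  simp only [coeff_add, coeff_single, coeff_erase, Finsupp.add_apply, Finsupp.single_apply,
    Finsupp.erase_apply]
  split_ifs <;> grind

theorem single_add_erase_erase_eq_erase_left (f : k[G]) {u v : G} (h : u ≠ v) :
    single v (f.coeff v) + (f.erase u).erase v = f.erase u := by
  simpa [coeff_erase, Finsupp.erase_ne h.symm] using single_add_erase v (f.erase u)

theorem card_support_erase_lt (f : k[G]) {u : G} (hu : f.coeff u ≠ 0) :
    (f.erase u).coeff.support.card < f.coeff.support.card := by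
  classical
  rw [coeff_erase, Finsupp.support_erase]
  exact Finset.card_erase_lt_of_mem (Finsupp.mem_support_iff.2 hu)

end Semiring

theorem isUnit_single {k G : Type*} [CommSemiring k] [AddCommGroup G] {g : G} {c : k}
    (hc : IsUnit c) : IsUnit (single g c) := by
  obtain ⟨c, rfl⟩ := hc
  exact .of_mul_eq_one (single (-g) ↑c⁻¹) (by simp [one_def])

end AddMonoidAlgebra

theorem add_add_mul_eq_mul_mul_of_add_self {R : Type*} [CommSemiring R]
    (hR : ∀ x : R, x + x = x) (a b c : R) :
    (a + b + c) * (a * b + a * c + b * c) = (a + b) * (a + c) * (b + c) := by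
  calc (a + b + c) * (a * b + a * c + b * c)
      = a ^ 2 * b + a ^ 2 * c + a * b ^ 2 + b ^ 2 * c + a * c ^ 2 + b * c ^ 2 + a * b * c
        + (a * b * c + a * b * c) := by ring
    _ = a ^ 2 * b + a ^ 2 * c + a * b ^ 2 + b ^ 2 * c + a * c ^ 2 + b * c ^ 2 + a * b * c
        + a * b * c := by rw [hR]
    _ = (a + b) * (a + c) * (b + c) := by ring

theorem Ideal.IsPrime.add_mem_or_add_mem_or_add_mem {R : Type*} [CommSemiring R]
    (hR : ∀ x : R, x + x = x) {P : Ideal R} (hP : P.IsPrime) {a b c : R}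
    (h : a + b + c ∈ P) : a + b ∈ P ∨ a + c ∈ P ∨ b + c ∈ P := by
  have hprod : (a + b) * (a + c) * (b + c) ∈ P := by
    rw [← add_add_mul_eq_mul_mul_of_add_self hR]
    exact P.mul_mem_right _ h
  rcases hP.mem_or_mem hprod with h | h
  · exact (hP.mem_or_mem h).imp_right .inl
  · exact .inr (.inr h)

open AddMonoidAlgebra in
theorem Ideal.IsPrime.exists_single_add_single_mem {k G : Type*} [CommSemiring k] [AddCommGroup G]
    (hk_add : ∀ c : k, c + c = c) (hk_unit : ∀ c : k, c ≠ 0 → IsUnit c)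
    {P : Ideal k[G]} (hP : P.IsPrime) {f : k[G]} (hfP : f ∈ P) (hf : f ≠ 0) :
    ∃ (u v : G) (c d : k), u ≠ v ∧ c ≠ 0 ∧ d ≠ 0 ∧ single u c + single v d ∈ P := by
  obtain ⟨u, hu⟩ : ∃ u, f.coeff u ≠ 0 := by simpa [← coeff_eq_zero, Finsupp.ext_iff] using hf
  by_cases hfu : f.erase u = 0
  · have hf_eq : single u (f.coeff u) = f := by simpa [hfu] using single_add_erase u f
    exact absurd (P.eq_top_of_isUnit_mem hfP (hf_eq ▸ isUnit_single (hk_unit _ hu))) hP.ne_top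
  obtain ⟨v, hv⟩ : ∃ v, (f.erase u).coeff v ≠ 0 := by
    simpa [← coeff_eq_zero, Finsupp.ext_iff] using hfu
  have huv : u ≠ v := by
    rintro rfl
    exact hv Finsupp.erase_same
  have hfv : f.coeff v ≠ 0 := by rwa [coeff_erase, Finsupp.erase_ne huv.symm] at hv
  have hfv0 : f.erase v ≠ 0 := fun h ↦ hu <| by
    simpa [coeff_erase, Finsupp.erase_ne huv] using congr(($h).coeff u)
  have hsplit : single u (f.coeff u) + single v (f.coeff v) + (f.erase u).erase v = f := by
    rw [add_assoc, single_add_erase_erase_eq_erase_left f huv, single_add_erase]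
  rcases hP.add_mem_or_add_mem_or_add_mem (add_self_of_forall_add_self hk_add)
    (hsplit ▸ hfP) with h | h | h
  · exact ⟨u, v, _, _, huv, hu, hfv, h⟩
  · rw [single_add_erase_erase_eq_erase_right f huv] at h
    exact hP.exists_single_add_single_mem hk_add hk_unit h hfv0
  · rw [single_add_erase_erase_eq_erase_left f huv] at h
    exact hP.exists_single_add_single_mem hk_add hk_unit h hfu
termination_by f.coeff.support.card
decreasing_by
  · exact card_support_erase_lt f hfv
  · exact card_support_erase_lt f hu

/-- Every non-zero prime ideal of the tropical Laurent polynomial semiring contains a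
binomial, i.e. a sum of two terms with distinct exponents and nonzero coefficients. -/
theorem prime_ideal_contains_binomial {n : ℕ} (I : Ideal (TLaur n))
    (hprime : I.IsPrime) (hnz : I ≠ ⊥) :
    ∃ (u v : Fin n → ℤ) (c d : T), u ≠ v ∧ c ≠ 0 ∧ d ≠ 0 ∧
      (AddMonoidAlgebra.ofCoeff (Finsupp.single u c + Finsupp.single v d : (Fin n → ℤ) →₀ T) : TLaur n) ∈ I := by
  obtain ⟨f, hfI, hf⟩ := Submodule.exists_mem_ne_zero_of_ne_bot hnz
  exact hprime.exists_single_add_single_mem (fun _ ↦ Tropical.add_self _)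
    (fun _ ↦ Tropical.isUnit_of_ne_zero) hfI hf
end

section
/- If P is a prime congruence of the tropical Laurent polynomial semiring contained in some geometric prime congruence, then the variety V(P) (the set of points of ℝⁿ whose associated evaluation congruence contains P) consists of exactly one point; in general, for any prime congruence P, V(P) has at most one point. -/
/-- The value of the `u`-th term of the Laurent polynomial `f` at the point `p ∈ ℝⁿ`. -/
noncomputable def trm {n : ℕ} (f : TLaur n) (p : Fin n → ℝ) (u : Fin n → ℤ) : T :=
  toF f u * Tropical.trop ((OrderDual.toDual (∑ i, (u i : ℝ) * p i) : OrderDual ℝ) :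
    WithTop (OrderDual ℝ))

/-- Tropical evaluation of the Laurent polynomial `f` at `p ∈ ℝⁿ`
(the maximum of its term values). -/
noncomputable def evl {n : ℕ} (f : TLaur n) (p : Fin n → ℝ) : T :=
  ∑ u ∈ (toF f).support, trm f p u

/-- `f` tropically vanishes at `p`: its value is `-∞`, or its maximum is attained
by at least two distinct terms. -/
def Vanishes {n : ℕ} (f : TLaur n) (p : Fin n → ℝ) : Prop :=
  evl f p = 0 ∨ ∃ u ∈ (toF f).support, ∃ v ∈ (toF f).support,
    u ≠ v ∧ trm f p u = evl f p ∧ trm f p v = evl f p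

/-!
Idempotency makes the twisted product of `(a + b, a)` and `(a + b, b)` a trivial pair, so a
prime congruence identifies `a + b` with `a` or with `b`. For `a = xᵢ` and `b` a constant `c`,
this puts all points of `V(P)` on the same side of the hyperplane `xᵢ = c`; choosing `c` halfway
between the `i`-th coordinates of two points of `V(P)` forces these coordinates to agree.
-/

theorem IsPrimeCon.rel_add_left_or_rel_add_right {R : Type*} [CommSemiring R]
    (hR : ∀ x : R, x + x = x) {C : RingCon R} (hC : IsPrimeCon C) (a b : R) :
    C (a + b) a ∨ C (a + b) b := by
  refine hC.2 (a + b, a) (a + b, b) ?_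
  have key : (a + b) * (a + b) + a * b = (a + b) * b + a * (a + b) :=
    calc (a + b) * (a + b) + a * b = a * a + b * b + (a * b + a * b) + a * b := by ring
      _ = a * a + b * b + a * b + a * b := by rw [hR]
      _ = (a + b) * b + a * (a + b) := by ring
  show C ((a + b) * (a + b) + a * b) ((a + b) * b + a * (a + b))
  rw [key]
  exact C.refl _

noncomputable def T.ofReal (r : ℝ) : T :=
  Tropical.trop ((OrderDual.toDual r : OrderDual ℝ) : WithTop (OrderDual ℝ))

namespace T

theorem ofReal_injective : Function.Injective ofReal := fun a b h => by
  simpa [ofReal] using h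

theorem ofReal_add (a b : ℝ) : ofReal a + ofReal b = ofReal (max a b) := by
  rw [ofReal, ofReal, ← Tropical.trop_min, ← WithTop.coe_min, ← toDual_sup]
  rfl

theorem one_eq_ofReal_zero : (1 : T) = ofReal 0 := rfl

end T

theorem TLaur.add_self {n : ℕ} (f : TLaur n) : f + f = f := by
  ext u
  exact Tropical.add_self _

section Evaluation

variable {n : ℕ}

theorem evl_eq_sum (f : TLaur n) (p : Fin n → ℝ) :
    evl f p = (toF f).sum fun u c => c * T.ofReal (∑ i, (u i : ℝ) * p i) := rfl

theorem evl_add (f g : TLaur n) (p : Fin n → ℝ) : evl (f + g) p = evl f p + evl g p := by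
  simp only [evl_eq_sum, toF, AddMonoidAlgebra.coeff_add]
  exact Finsupp.sum_add_index' (fun _ => zero_mul _) (fun _ _ _ => add_mul _ _ _)

theorem evl_single (u : Fin n → ℤ) (c : T) (p : Fin n → ℝ) :
    evl (AddMonoidAlgebra.single u c) p = c * T.ofReal (∑ i, (u i : ℝ) * p i) := by
  rw [evl_eq_sum, toF, AddMonoidAlgebra.coeff_single]
  exact Finsupp.sum_single_index (zero_mul _)

theorem evl_single_zero (c : T) (p : Fin n → ℝ) : evl (AddMonoidAlgebra.single 0 c) p = c := by
  simp [evl_single, ← T.one_eq_ofReal_zero]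

theorem evl_single_coordinate (i : Fin n) (p : Fin n → ℝ) :
    evl (AddMonoidAlgebra.single (Pi.single i 1) 1) p = T.ofReal (p i) := by
  simp [evl_single, Pi.single_apply]

end Evaluation

def variety {n : ℕ} (P : RingCon (TLaur n)) : Set (Fin n → ℝ) :=
  {p | ∀ f g : TLaur n, P f g → evl f p = evl g p}

theorem variety_coord_same_side {n : ℕ} {P : RingCon (TLaur n)} (hP : IsPrimeCon P)
    {p q : Fin n → ℝ} (hp : p ∈ variety P) (hq : q ∈ variety P) (i : Fin n) (c : ℝ) :
    (c ≤ p i ∧ c ≤ q i) ∨ (p i ≤ c ∧ q i ≤ c) := by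
  set x : TLaur n := AddMonoidAlgebra.single (Pi.single i 1) 1
  set k : TLaur n := AddMonoidAlgebra.single 0 (T.ofReal c)
  have hx (r : Fin n → ℝ) : evl x r = T.ofReal (r i) := evl_single_coordinate i r
  have hk (r : Fin n → ℝ) : evl k r = T.ofReal c := evl_single_zero _ r
  have hmax {r : Fin n → ℝ} (hr : r ∈ variety P) {z : TLaur n} {y : ℝ}
      (hz : evl z r = T.ofReal y) (h : P (x + k) z) : max (r i) c = y :=
    T.ofReal_injective (by rw [← hz, ← hr _ _ h, evl_add, hx, hk, T.ofReal_add])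
  rcases hP.rel_add_left_or_rel_add_right TLaur.add_self x k with h | h
  · exact .inl ⟨max_eq_left_iff.mp (hmax hp (hx p) h), max_eq_left_iff.mp (hmax hq (hx q) h)⟩
  · exact .inr ⟨max_eq_right_iff.mp (hmax hp (hk p) h), max_eq_right_iff.mp (hmax hq (hk q) h)⟩

theorem variety_subsingleton {n : ℕ} {P : RingCon (TLaur n)} (hP : IsPrimeCon P) :
    (variety P).Subsingleton := fun p hp q hq => funext fun i => by
  rcases variety_coord_same_side hP hp hq i ((p i + q i) / 2) with ⟨h₁, h₂⟩ | ⟨h₁, h₂⟩ <;>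
    linarith

/-- The variety of a prime congruence `P` (points whose evaluation congruence contains
`P`) has at most one point; if `P` is contained in some geometric (evaluation)
congruence, it is exactly one point. -/
theorem variety_of_prime_congruence {n : ℕ} (P : RingCon (TLaur n)) (hP : IsPrimeCon P) :
    Set.Subsingleton {p : Fin n → ℝ | ∀ f g : TLaur n, P f g → evl f p = evl g p} ∧
    ((∃ p : Fin n → ℝ, ∀ f g : TLaur n, P f g → evl f p = evl g p) →
      ∃! p : Fin n → ℝ, ∀ f g : TLaur n, P f g → evl f p = evl g p) :=
  ⟨variety_subsingleton hP, fun ⟨p, hp⟩ => ⟨p, hp, fun _ hq => variety_subsingleton hP hq hp⟩⟩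
end

section
/- If I is a non-zero prime ideal of the tropical Laurent polynomial semiring T[x₁^{±1},…,x_n^{±1}], then its tropical variety V(I) ⊆ ℝⁿ contains at most one point. -/
/-!
Let `f ∈ I` be nonzero, `p ≠ q` points of `V(I)` and `x^s` a monomial of `f`. Pick monomials
`A = a x^(s+w)` and `B = b x^(s-w)` with `A` strictly dominating every term of `f` at `p` and `B`
every term of `f` at `q`. The price of this is `a + b ≈ max f(p) + max f(q) - ⟨w, p - q⟩`, and
since `p ≠ q` the integer vector `w` can be chosen to make it at most twice the coefficient of
`x^s`, i.e. at most the coefficient of `x^(2s)` in `f²`. Then `AB` is absorbed by `f²`, so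
`(f + A)(f + B) = f (f + A + B) ∈ I`, and primality puts `f + A` or `f + B` in `I`. But `f + A`
has a unique dominant term at `p`, so it does not vanish there, and likewise `f + B` at `q`.
-/

section TropicalOrder

variable {R S : Type*} [LinearOrder R] [OrderTop R]

theorem Tropical.sum_le_of_mem {s : Finset S} {g : S → Tropical R} {i : S} (hi : i ∈ s) :
    ∑ j ∈ s, g j ≤ g i := by
  rw [← Tropical.untrop_le_iff, Finset.untrop_sum']
  exact Finset.inf_le hi

theorem Tropical.le_sum_of_forall_le {s : Finset S} {g : S → Tropical R} {a : Tropical R}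
    (h : ∀ j ∈ s, a ≤ g j) : a ≤ ∑ j ∈ s, g j := by
  rw [← Tropical.untrop_le_iff, Finset.untrop_sum']
  exact Finset.le_inf fun j hj => Tropical.untrop_le_iff.mpr (h j hj)

end TropicalOrder

/-- The order of `T` is reversed with respect to `ℝ` (`toT r ≤ toT s ↔ s ≤ r`), and `0 = -∞` is
its top element. -/
noncomputable def toT (r : ℝ) : T :=
  Tropical.trop ((OrderDual.toDual r : OrderDual ℝ) : WithTop (OrderDual ℝ))

theorem toT_mul (r s : ℝ) : toT r * toT s = toT (r + s) := rfl

theorem toT_ne_zero (r : ℝ) : toT r ≠ 0 :=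
  fun h => WithTop.coe_ne_top (Tropical.trop_injective h)

theorem toT_le_toT {r s : ℝ} : toT r ≤ toT s ↔ s ≤ r := WithTop.coe_le_coe

theorem toT_lt_toT {r s : ℝ} : toT r < toT s ↔ s < r := WithTop.coe_lt_coe

theorem exists_eq_toT {c : T} (h : c ≠ 0) : ∃ r : ℝ, c = toT r := by
  obtain ⟨a, ha⟩ := WithTop.ne_top_iff_exists.mp fun ht => h (Tropical.untrop_injective ht)
  exact ⟨OrderDual.ofDual a, Tropical.untrop_injective ha.symm⟩

section MonoidAlgebra

variable {G : Type} [AddMonoid G]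

theorem coeff_mul_le (f g : AddMonoidAlgebra T G) (x y : G) :
    toF (f * g) (x + y) ≤ toF f x * toF g y := by
  classical
  by_cases hx : x ∈ (toF f).support
  · by_cases hy : y ∈ (toF g).support
    · rw [toF, AddMonoidAlgebra.coeff_mul, Finsupp.sum]
      refine (Tropical.sum_le_of_mem (R := WithTop ℝᵒᵈ) hx).trans ?_
      rw [Finsupp.sum]
      refine (Tropical.sum_le_of_mem (R := WithTop ℝᵒᵈ) hy).trans ?_
      rw [if_pos rfl]
      rfl
    · rw [Finsupp.notMem_support_iff.mp hy, mul_zero]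
      exact Tropical.le_zero _
  · rw [Finsupp.notMem_support_iff.mp hx, zero_mul]
    exact Tropical.le_zero _

theorem exists_coeff_eq_toT {f : AddMonoidAlgebra T G} (hf : f ≠ 0) :
    ∃ s, ∃ γ : ℝ, toF f s = toT γ := by
  obtain ⟨s, hs⟩ := Finsupp.support_nonempty_iff.mpr (AddMonoidAlgebra.coeff_eq_zero.not.mpr hf)
  exact ⟨s, exists_eq_toT (Finsupp.mem_support_iff.mp hs)⟩

theorem add_single_eq_self_of_coeff_le (F : AddMonoidAlgebra T G) (x : G) {c : T}
    (h : toF F x ≤ c) : F + AddMonoidAlgebra.single x c = F := by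
  refine AddMonoidAlgebra.coeff_injective (Finsupp.ext fun w => ?_)
  show toF F w + Finsupp.single x c w = toF F w
  by_cases hw : w = x
  · subst hw
    rw [Finsupp.single_eq_same, Tropical.add_eq_left h]
  · rw [Finsupp.single_eq_of_ne hw, add_zero]

end MonoidAlgebra

theorem Ideal.add_mul_add_mem_of_add_mul_eq {R : Type*} [CommSemiring R] (I : Ideal R)
    {f a b : R} (hf : f ∈ I) (h : f * f + a * b = f * f) : (f + a) * (f + b) ∈ I := by
  have : (f + a) * (f + b) = f * (f + a + b) :=
    calc (f + a) * (f + b) = (f * f + a * b) + f * b + a * f := by ring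
      _ = f * (f + a + b) := by rw [h]; ring
  exact this ▸ I.mul_mem_right _ hf

section Laurent

variable {n : ℕ}

noncomputable def pair (u : Fin n → ℤ) (p : Fin n → ℝ) : ℝ := ∑ i, (u i : ℝ) * p i

theorem pair_add (u v : Fin n → ℤ) (p : Fin n → ℝ) : pair (u + v) p = pair u p + pair v p := by
  simp only [pair, Pi.add_apply, Int.cast_add, add_mul, Finset.sum_add_distrib]

theorem pair_sub (u v : Fin n → ℤ) (p : Fin n → ℝ) : pair (u - v) p = pair u p - pair v p := by
  simp only [pair, Pi.sub_apply, Int.cast_sub, sub_mul, Finset.sum_sub_distrib]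

theorem pair_single (i : Fin n) (k : ℤ) (p : Fin n → ℝ) : pair (Pi.single i k) p = k * p i := by
  rw [pair, Finset.sum_eq_single i (fun j _ hj => by simp [hj]) (by simp), Pi.single_eq_same]

theorem exists_pair_sub_ge {p q : Fin n → ℝ} (hpq : p ≠ q) (C : ℝ) :
    ∃ w : Fin n → ℤ, C ≤ pair w p - pair w q := by
  obtain ⟨i, hi⟩ := Function.ne_iff.mp hpq
  have hsub (k : ℤ) : pair (Pi.single i k) p - pair (Pi.single i k) q = k * (p i - q i) := by
    rw [pair_single, pair_single]; ring
  rcases (sub_ne_zero.mpr hi).lt_or_gt with hd | hd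
  · refine ⟨Pi.single i ⌊C / (p i - q i)⌋, ?_⟩
    rw [hsub, ← le_div_iff_of_neg hd]
    exact Int.floor_le _
  · refine ⟨Pi.single i ⌈C / (p i - q i)⌉, ?_⟩
    rw [hsub, ← div_le_iff₀ hd]
    exact Int.le_ceil _

theorem trm_eq (f : TLaur n) (p : Fin n → ℝ) (u : Fin n → ℤ) :
    trm f p u = toF f u * toT (pair u p) := rfl

theorem evl_le_trm (f : TLaur n) (p : Fin n → ℝ) (u : Fin n → ℤ) : evl f p ≤ trm f p u := by
  by_cases hu : u ∈ (toF f).support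
  · exact Tropical.sum_le_of_mem hu
  · rw [trm, Finsupp.notMem_support_iff.mp hu, zero_mul]
    exact Tropical.le_zero _

theorem evl_ne_zero {f : TLaur n} (hf : f ≠ 0) (p : Fin n → ℝ) : evl f p ≠ 0 := by
  obtain ⟨s, γ, hγ⟩ := exists_coeff_eq_toT hf
  intro h
  have := h ▸ evl_le_trm f p s
  rw [trm_eq, hγ, toT_mul] at this
  exact toT_ne_zero _ (le_antisymm (Tropical.le_zero _) this)

theorem not_vanishes_of_forall_lt {g : TLaur n} {p : Fin n → ℝ} {u : Fin n → ℤ}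
    (h0 : trm g p u ≠ 0) (hlt : ∀ w, w ≠ u → trm g p u < trm g p w) : ¬ Vanishes g p := by
  have hevl : evl g p = trm g p u := le_antisymm (evl_le_trm g p u)
    (Tropical.le_sum_of_forall_le fun w _ => by
      rcases eq_or_ne w u with rfl | hw
      · exact le_rfl
      · exact (hlt w hw).le)
  rintro (h | ⟨v, -, v', -, hvv', hv, hv'⟩)
  · exact h0 (hevl ▸ h)
  · rw [hevl] at hv hv'
    rcases hvv'.ne_or_ne u with h | h
    · exact (hlt v h).ne' hv
    · exact (hlt v' h).ne' hv'

theorem not_vanishes_add_single (f : TLaur n) (p : Fin n → ℝ) (u : Fin n → ℤ) (a : ℝ)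
    (h : toT (a + pair u p) < evl f p) :
    ¬ Vanishes (f + AddMonoidAlgebra.single u (toT a)) p := by
  set g := f + AddMonoidAlgebra.single u (toT a)
  have hcoeff (w : Fin n → ℤ) : toF g w = toF f w + Finsupp.single u (toT a) w := rfl
  have hu : trm g p u = toT (a + pair u p) := by
    rw [trm_eq, hcoeff, Finsupp.single_eq_same, add_mul, ← trm_eq, toT_mul]
    exact Tropical.add_eq_right (h.trans_le (evl_le_trm f p u)).le
  have hw (w : Fin n → ℤ) (hwu : w ≠ u) : trm g p w = trm f p w := by
    rw [trm_eq, hcoeff, Finsupp.single_eq_of_ne hwu, add_zero, trm_eq]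
  refine not_vanishes_of_forall_lt (hu ▸ toT_ne_zero _) fun w hwu => ?_
  rw [hu, hw w hwu]
  exact h.trans_le (evl_le_trm f p w)

theorem exists_absorbed_dominating_monomials {f : TLaur n} (hf : f ≠ 0) {p q : Fin n → ℝ}
    (hpq : p ≠ q) : ∃ A B : TLaur n,
      f * f + A * B = f * f ∧ ¬ Vanishes (f + A) p ∧ ¬ Vanishes (f + B) q := by
  obtain ⟨s, γ, hγ⟩ := exists_coeff_eq_toT hf
  obtain ⟨Mp, hMp⟩ := exists_eq_toT (evl_ne_zero hf p)
  obtain ⟨Mq, hMq⟩ := exists_eq_toT (evl_ne_zero hf q)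
  obtain ⟨w, hw⟩ := exists_pair_sub_ge hpq (Mp + Mq + 2 - pair s p - pair s q - γ - γ)
  set a := Mp - pair (s + w) p + 1
  set b := Mq - pair (s - w) q + 1
  have hab : a + b ≤ γ + γ := by
    simp only [a, b, pair_add, pair_sub]
    linarith
  refine ⟨AddMonoidAlgebra.single (s + w) (toT a), AddMonoidAlgebra.single (s - w) (toT b),
    ?_, ?_, ?_⟩
  · rw [AddMonoidAlgebra.single_mul_single, toT_mul, add_add_sub_cancel]
    refine add_single_eq_self_of_coeff_le _ _ ?_
    calc toF (f * f) (s + s) ≤ toF f s * toF f s := coeff_mul_le f f s s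
      _ = toT (γ + γ) := by rw [hγ, toT_mul]
      _ ≤ toT (a + b) := toT_le_toT.mpr hab
  · exact not_vanishes_add_single f p _ a (by rw [hMp, toT_lt_toT]; linarith)
  · exact not_vanishes_add_single f q _ b (by rw [hMq, toT_lt_toT]; linarith)

end Laurent

/-- The tropical variety of a non-zero prime ideal of the tropical Laurent polynomial
semiring contains at most one point. -/
theorem variety_of_prime_ideal_subsingleton {n : ℕ} (I : Ideal (TLaur n))
    (hprime : I.IsPrime) (hnz : I ≠ ⊥) :
    Set.Subsingleton {p : Fin n → ℝ | ∀ f ∈ I, Vanishes f p} := by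
  intro p hp q hq
  by_contra hpq
  obtain ⟨f, hfI, hf⟩ := Submodule.exists_mem_ne_zero_of_ne_bot hnz
  obtain ⟨A, B, habs, hA, hB⟩ := exists_absorbed_dominating_monomials hf hpq
  rcases hprime.mem_or_mem (I.add_mul_add_mem_of_add_mul_eq hfI habs) with h | h
  · exact hA (hp _ h)
  · exact hB (hq _ h)
end
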